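/- Let P, Q ⊆ ℝⁿ be two polytopes with P ∩ Q nonempty. The map (F,G) ↦ F ∩ G is a bijection from {(F,G) ∈ L(P) × L(Q) : relint(F) ∩ relint(G) ≠ ∅} onto the set of nonempty faces of the polytope P ∩ Q. Moreover, for any such pair, N_{P∩Q}(F∩G) = cone(N_P(F) ∪ N_Q(G)). -/

import Mathlib

open scoped BigOperators

noncomputable section

/-- Vectors in `ℝⁿ`. -/
abbrev Vec (n : ℕ) := Fin n → ℝ

/-- The standard scalar product on `ℝⁿ`. -/
def dot {n : ℕ} (x y : Vec n) : ℝ := ∑ i, x i * y i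

/-- A polytope is the convex hull of a finite set of points. -/
def IsPolytope {n : ℕ} (P : Set (Vec n)) : Prop :=
  ∃ S : Finset (Vec n), P = convexHull ℝ (S : Set (Vec n))

/-- A face of `P`: either `P` itself (take `c = 0`) or the subset of `P` where some linear
functional attains its maximum over `P`. -/
def IsFace {n : ℕ} (P F : Set (Vec n)) : Prop :=
  ∃ c : Vec n, F = {x ∈ P | ∀ y ∈ P, dot c y ≤ dot c x}

/-- Dimension of a subset of `ℝⁿ`: the rank of the direction of its affine span. -/
noncomputable def sdim {n : ℕ} (A : Set (Vec n)) : ℕ :=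
  Module.finrank ℝ (affineSpan ℝ A).direction

/-- The normal cone of a face `F` of `P`. -/
def normalCone {n : ℕ} (P F : Set (Vec n)) : Set (Vec n) :=
  {c | F ⊆ {x ∈ P | ∀ y ∈ P, dot c y ≤ dot c x}}

/-- `coneOf X`: nonnegative linear combinations of finitely many elements of `X`. -/
def coneOf {n : ℕ} (X : Set (Vec n)) : Set (Vec n) :=
  {v | ∃ (k : ℕ) (x : Fin k → Vec n) (l : Fin k → ℝ),
      (∀ i, x i ∈ X) ∧ (∀ i, 0 ≤ l i) ∧ v = ∑ i, l i • x i}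

/-- The reflection `ρ_z P = 2z - P` of `P` with respect to `z`. -/
def reflP {n : ℕ} (z : Vec n) (P : Set (Vec n)) : Set (Vec n) :=
  (fun x => (2 : ℝ) • z - x) '' P

/-- An edge is a 1-dimensional face. -/
def IsEdge {n : ℕ} (P E : Set (Vec n)) : Prop := IsFace P E ∧ sdim E = 1

/-- `(P, v)` is oriented if `v` is not perpendicular to any edge of `P`. -/
def Oriented {n : ℕ} (P : Set (Vec n)) (v : Vec n) : Prop :=
  ∀ E, IsEdge P E → ∀ d ∈ (affineSpan ℝ E).direction, d ≠ 0 → dot d v ≠ 0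

/-- `(P, v)` is positively oriented if `(P ∩ ρ_z P, v)` is oriented for every `z ∈ P`. -/
def PosOriented {n : ℕ} (P : Set (Vec n)) (v : Vec n) : Prop :=
  ∀ z ∈ P, Oriented (P ∩ reflP z P) v

/-- `x` is the minimizer of `⟨-, v⟩` on `P`. -/
def IsBotOf {n : ℕ} (P : Set (Vec n)) (v x : Vec n) : Prop :=
  x ∈ P ∧ ∀ y ∈ P, dot v x ≤ dot v y

/-- `x` is the maximizer of `⟨-, v⟩` on `P`. -/
def IsTopOf {n : ℕ} (P : Set (Vec n)) (v x : Vec n) : Prop :=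
  x ∈ P ∧ ∀ y ∈ P, dot v y ≤ dot v x

/-- `(P, v)` is quasi-oriented if `⟨-, v⟩` has a unique minimizer and a unique maximizer on `P`. -/
def QuasiOriented {n : ℕ} (P : Set (Vec n)) (v : Vec n) : Prop :=
  (∃! x, IsBotOf P v x) ∧ (∃! x, IsTopOf P v x)

/-- `(P, v)` is quasi-positively oriented if `(P ∩ ρ_z P, v)` is quasi-oriented for all `z ∈ P`. -/
def QuasiPosOriented {n : ℕ} (P : Set (Vec n)) (v : Vec n) : Prop :=
  ∀ z ∈ P, QuasiOriented (P ∩ reflP z P) v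

/-- The polytope `P^φ = π^φ(P × P) ⊆ ℝ^{n+1}`, where `π^φ(x,y) = ((x+y)/2, ⟨x - y, v⟩)`. -/
def Pphi {n : ℕ} (P : Set (Vec n)) (v : Vec n) : Set (Vec (n + 1)) :=
  {w | ∃ x ∈ P, ∃ y ∈ P, w = Fin.snoc ((1 / 2 : ℝ) • (x + y)) (dot (x - y) v)}

/-- The pair of faces `(F, G)` belongs to `F^φ`: there are no `x ∈ F`, `y ∈ G`, `λ > 0` with
`(π(x,y), φ(x,y) - λ) ∈ P^φ`. -/
def InFphi {n : ℕ} (P : Set (Vec n)) (v : Vec n) (F G : Set (Vec n)) : Prop :=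
  ¬ ∃ x ∈ F, ∃ y ∈ G, ∃ lam : ℝ, 0 < lam ∧
      (Fin.snoc ((1 / 2 : ℝ) • (x + y)) (dot (x - y) v - lam) : Vec (n + 1)) ∈ Pphi P v

/-- The set `(A + B)/2`. -/
def avgSet {n : ℕ} (A B : Set (Vec n)) : Set (Vec n) :=
  {z | ∃ x ∈ A, ∃ y ∈ B, z = (1 / 2 : ℝ) • (x + y)}

/-- The coherent subdivision `π(F^φ)` is tight. -/
def TightSub {n : ℕ} (P : Set (Vec n)) (v : Vec n) : Prop :=
  ∀ F G : Set (Vec n), IsFace P F → IsFace P G → F.Nonempty → G.Nonempty →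
    InFphi P v F G → sdim F + sdim G = sdim (avgSet F G)

/-- `d` is a direction of an edge of `P ∩ ρ_z P` for some `z ∈ P`; the hyperplanes of the
fundamental hyperplane arrangement `H_P` are the orthogonal complements of such directions. -/
def EdgeDir {n : ℕ} (P : Set (Vec n)) (d : Vec n) : Prop :=
  d ≠ 0 ∧ ∃ z ∈ P, ∃ E, IsEdge (P ∩ reflP z P) E ∧ d ∈ (affineSpan ℝ E).direction

/-- The cone `cone(-N_P(F) ∪ N_P(G))`. -/
def diagCone {n : ℕ} (P F G : Set (Vec n)) : Set (Vec n) :=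
  coneOf ((Neg.neg '' normalCone P F) ∪ normalCone P G)



/-!
If `z ∈ relint F ∩ relint G`, a functional `c` maximized on `P ∩ Q` at `z` splits as `a + (c - a)`
with `a` maximized on `P` and `c - a` on `Q` at `z`: otherwise Farkas' lemma (for the vertices of
`P` and `Q`; finitely generated cones are closed by Carathéodory's reduction) produces a direction
pointing into both polytopes along which `c` increases. A functional maximized at a relative
interior point of `F` is maximized on all of `F`, so `a ∈ N_P(F)` and `c - a ∈ N_Q(G)`.

Two faces sharing a relative interior point coincide; for injectivity the shared point is the
midpoint of relative interior points of `F ∩ G` and `F' ∩ G'`. For surjectivity, a relative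
interior point `z` of a face `E` of `P ∩ Q` lies in the relative interior of the smallest faces
`F ∋ z` of `P` and `G ∋ z` of `Q` (a face of a face of a polytope is a face), hence in
`relint (F ∩ G)`, so that `E = F ∩ G`.
-/

open Filter Topology

section Dot

variable {n : ℕ}

theorem dot_eq_dotProduct (x y : Vec n) : dot x y = x ⬝ᵥ y := rfl

theorem add_dot (a b x : Vec n) : dot (a + b) x = dot a x + dot b x := add_dotProduct a b x

theorem isLinearMap_dot (c : Vec n) : IsLinearMap ℝ (dot c) :=
  ⟨dotProduct_add c, fun r x => dotProduct_smul r c x⟩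

theorem exists_dot_eq (f : Vec n →ₗ[ℝ] ℝ) : ∃ c : Vec n, ∀ x, dot c x = f x :=
  ⟨(dotProductEquiv ℝ (Fin n)).symm f,
    fun x => congrArg (· x) ((dotProductEquiv ℝ (Fin n)).apply_symm_apply f)⟩

theorem dot_le_of_mem_convexHull {S : Set (Vec n)} {c y : Vec n} {r : ℝ}
    (h : ∀ s ∈ S, dot c s ≤ r) (hy : y ∈ convexHull ℝ S) : dot c y ≤ r :=
  convexHull_min h (convex_halfSpace_le (isLinearMap_dot c) r) hy

end Dot

section Faces

variable {n : ℕ} {A B F G : Set (Vec n)}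

def exposedFace (A : Set (Vec n)) (c : Vec n) : Set (Vec n) :=
  {x ∈ A | ∀ y ∈ A, dot c y ≤ dot c x}

theorem isFace_iff : IsFace A F ↔ ∃ c, F = exposedFace A c := Iff.rfl

theorem isFace_self (A : Set (Vec n)) : IsFace A A :=
  ⟨0, by ext; simp [dot_eq_dotProduct]⟩

theorem exposedFace_subset {c : Vec n} : exposedFace A c ⊆ A := Set.sep_subset _ _

theorem IsFace.subset (hF : IsFace A F) : F ⊆ A := by
  obtain ⟨c, rfl⟩ := hF
  exact exposedFace_subset

theorem convex_exposedFace (hA : Convex ℝ A) (c : Vec n) : Convex ℝ (exposedFace A c) := by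
  have : exposedFace A c = A ∩ ⋂ y ∈ A, {x | dot c y ≤ dot c x} := by
    ext; simp [exposedFace]
  rw [this]
  exact hA.inter (convex_iInter₂ fun y _ => convex_halfSpace_ge (isLinearMap_dot c) _)

theorem IsFace.convex (hF : IsFace A F) (hA : Convex ℝ A) : Convex ℝ F := by
  obtain ⟨c, rfl⟩ := hF
  exact convex_exposedFace hA c

theorem IsFace.inter (hF : IsFace A F) (hG : IsFace B G) (hFG : (F ∩ G).Nonempty) :
    IsFace (A ∩ B) (F ∩ G) := by
  obtain ⟨c, rfl⟩ := hF
  obtain ⟨d, rfl⟩ := hG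
  obtain ⟨w, hwF, hwG⟩ := hFG
  refine ⟨c + d, Set.Subset.antisymm ?_ ?_⟩
  · rintro x ⟨⟨hxA, hxc⟩, hxB, hxd⟩
    refine ⟨⟨hxA, hxB⟩, fun y hy => ?_⟩
    rw [add_dot, add_dot]
    exact add_le_add (hxc y hy.1) (hxd y hy.2)
  · rintro x ⟨⟨hxA, hxB⟩, hx⟩
    have hcx := hwF.2 x hxA
    have hdx := hwG.2 x hxB
    have hw := hx w ⟨hwF.1, hwG.1⟩
    rw [add_dot, add_dot] at hw
    exact ⟨⟨hxA, fun y hy => (hwF.2 y hy).trans (by linarith)⟩,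
      ⟨hxB, fun y hy => (hwG.2 y hy).trans (by linarith)⟩⟩

theorem normalCone_anti {A' F' : Set (Vec n)} (hA : A' ⊆ A) (hF : F' ⊆ F) (hFA : F' ⊆ A') :
    normalCone A F ⊆ normalCone A' F' := fun _ hc _ hx =>
  ⟨hFA hx, fun y hy => (hc (hF hx)).2 y (hA hy)⟩

theorem coneOf_subset_normalCone {X : Set (Vec n)} (hX : X ⊆ normalCone A F) (hFA : F ⊆ A) :
    coneOf X ⊆ normalCone A F := by
  rintro _ ⟨k, v, l, hv, hl, rfl⟩ x hx
  refine ⟨hFA hx, fun y hy => ?_⟩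
  simp only [dot_eq_dotProduct, sum_dotProduct, smul_dotProduct, smul_eq_mul]
  exact Finset.sum_le_sum fun i _ =>
    mul_le_mul_of_nonneg_left ((hX (hv i) hx).2 y hy) (hl i)

theorem add_mem_coneOf {X : Set (Vec n)} {a b : Vec n} (ha : a ∈ X) (hb : b ∈ X) :
    a + b ∈ coneOf X :=
  ⟨2, ![a, b], ![1, 1], fun i => by fin_cases i <;> simpa, fun i => by fin_cases i <;> simp,
    by simp [Fin.sum_univ_two]⟩

end Faces

section IntrinsicInterior

variable {E : Type*} [NormedAddCommGroup E] [NormedSpace ℝ E] {A B : Set E} {x z : E}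

theorem mem_intrinsicInterior_iff_ball :
    z ∈ intrinsicInterior ℝ A ↔
      z ∈ affineSpan ℝ A ∧ ∃ r > 0, ∀ y ∈ affineSpan ℝ A, dist y z < r → y ∈ A := by
  rw [mem_intrinsicInterior]
  constructor
  · rintro ⟨z, hz, rfl⟩
    obtain ⟨r, hr, hball⟩ := Metric.mem_nhds_iff.1 (mem_interior_iff_mem_nhds.1 hz)
    exact ⟨z.2, r, hr, fun y hy hyz => hball (show dist (⟨y, hy⟩ : affineSpan ℝ A) z < r from hyz)⟩
  · rintro ⟨hz, r, hr, hball⟩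
    exact ⟨⟨z, hz⟩, mem_interior_iff_mem_nhds.2
      (Metric.mem_nhds_iff.2 ⟨r, hr, fun y hy => hball y y.2 hy⟩), rfl⟩

theorem intrinsicInterior_inter_subset :
    intrinsicInterior ℝ A ∩ intrinsicInterior ℝ B ⊆ intrinsicInterior ℝ (A ∩ B) := by
  rintro z ⟨hzA, hzB⟩
  obtain ⟨-, r, hr, hA⟩ := mem_intrinsicInterior_iff_ball.1 hzA
  obtain ⟨-, s, hs, hB⟩ := mem_intrinsicInterior_iff_ball.1 hzB
  have hz : z ∈ A ∩ B := ⟨intrinsicInterior_subset hzA, intrinsicInterior_subset hzB⟩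
  refine mem_intrinsicInterior_iff_ball.2 ⟨subset_affineSpan ℝ _ hz, min r s, lt_min hr hs,
    fun y hy hyz => ⟨hA y ?_ (hyz.trans_le (min_le_left _ _)),
      hB y ?_ (hyz.trans_le (min_le_right _ _))⟩⟩
  · exact affineSpan_mono ℝ Set.inter_subset_left hy
  · exact affineSpan_mono ℝ Set.inter_subset_right hy

theorem exists_pos_add_smul_sub_mem_of_mem_intrinsicInterior
    (hz : z ∈ intrinsicInterior ℝ A) (hx : x ∈ A) : ∃ ε : ℝ, 0 < ε ∧ z + ε • (z - x) ∈ A := by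
  obtain ⟨hzA, r, hr, hball⟩ := mem_intrinsicInterior_iff_ball.1 hz
  have hlim : Tendsto (fun t : ℝ => z + t • (z - x)) (𝓝[>] 0) (𝓝 z) := by
    have : Tendsto (fun t : ℝ => z + t • (z - x)) (𝓝 0) (𝓝 (z + (0 : ℝ) • (z - x))) :=
      tendsto_const_nhds.add (tendsto_id.smul_const _)
    simpa using this.mono_left nhdsWithin_le_nhds
  obtain ⟨ε, hεr, hε⟩ :=
    ((hlim.eventually (Metric.ball_mem_nhds z hr)).and self_mem_nhdsWithin).exists
  refine ⟨ε, hε, hball _ ?_ hεr⟩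
  rw [add_comm]
  exact AffineSubspace.vadd_mem_of_mem_direction
    (Submodule.smul_mem _ ε (AffineSubspace.vsub_mem_direction hzA (subset_affineSpan ℝ A hx))) hzA

theorem midpoint_mem_intrinsicInterior (hA : Convex ℝ A) (hz : z ∈ intrinsicInterior ℝ A)
    (hx : x ∈ A) : midpoint ℝ z x ∈ intrinsicInterior ℝ A := by
  obtain ⟨hzA, r, hr, hball⟩ := mem_intrinsicInterior_iff_ball.1 hz
  have hxA := subset_affineSpan ℝ A hx
  refine mem_intrinsicInterior_iff_ball.2
    ⟨AffineMap.lineMap_mem _ hzA hxA, r / 2, half_pos hr, fun y hy hym => ?_⟩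
  have hy' : y + (y - x) ∈ A := by
    refine hball _ ?_ ?_
    · rw [add_comm]
      exact AffineSubspace.vadd_mem_of_mem_direction (AffineSubspace.vsub_mem_direction hy hxA) hy
    · have : y + (y - x) - z = (2 : ℝ) • (y - midpoint ℝ z x) := by
        rw [midpoint_eq_smul_add, invOf_eq_inv]; module
      rw [dist_eq_norm, this, norm_smul, ← dist_eq_norm, Real.norm_two]
      linarith
  have := hA hy' hx (by norm_num : (0 : ℝ) ≤ 1 / 2) (by norm_num : (0 : ℝ) ≤ 1 / 2) (by norm_num)
  convert this using 1
  module

end IntrinsicInterior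

section Support

variable {E : Type*} [NormedAddCommGroup E] [NormedSpace ℝ E] {A : Set E} {z : E}

theorem add_mem_intrinsicInterior_iff (hz : z ∈ affineSpan ℝ A) {w : (affineSpan ℝ A).direction} :
    (w : E) + z ∈ intrinsicInterior ℝ A ↔
      w ∈ interior {v : (affineSpan ℝ A).direction | (v : E) + z ∈ A} := by
  have hmem : ∀ v : (affineSpan ℝ A).direction, (v : E) + z ∈ affineSpan ℝ A :=
    fun v => AffineSubspace.vadd_mem_of_mem_direction v.2 hz
  rw [mem_intrinsicInterior_iff_ball, mem_interior_iff_mem_nhds, Metric.mem_nhds_iff]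
  simp only [hmem, true_and]
  refine exists_congr fun r => and_congr_right fun _ =>
    ⟨fun h v hv => h _ (hmem v) ?_, fun h y hy hyr => ?_⟩
  · simpa [dist_eq_norm] using hv
  · have hyz : y - z ∈ (affineSpan ℝ A).direction := AffineSubspace.vsub_mem_direction hy hz
    have := @h ⟨y - z, hyz⟩ (by simpa [dist_eq_norm, sub_sub, add_comm] using hyr)
    simpa using this

variable [FiniteDimensional ℝ E]

theorem exists_linearMap_lt_of_notMem_intrinsicInterior (hA : Convex ℝ A) (hz : z ∈ A)
    (hz' : z ∉ intrinsicInterior ℝ A) :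
    ∃ f : E →ₗ[ℝ] ℝ, (∀ y ∈ A, f y ≤ f z) ∧ ∃ y ∈ A, f y < f z := by
  -- separate `0` from the interior of `A - z` inside the direction of `affineSpan ℝ A`,
  -- then extend the functional to `E`
  set W := (affineSpan ℝ A).direction
  set B : Set W := {v | (v : E) + z ∈ A}
  have hzA : z ∈ affineSpan ℝ A := subset_affineSpan ℝ A hz
  have hB : Convex ℝ B := by
    intro v hv w hw a b ha hb hab
    show ((a • v + b • w : W) : E) + z ∈ A
    convert hA hv hw ha hb hab using 1
    push_cast
    linear_combination (norm := module) -hab • z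
  have h0 : (0 : W) ∉ interior B := fun h =>
    hz' (by simpa using (add_mem_intrinsicInterior_iff hzA).2 h)
  obtain ⟨p, hp⟩ := Set.Nonempty.intrinsicInterior hA ⟨z, hz⟩
  set w₀ : W := ⟨p - z, AffineSubspace.vsub_mem_direction
    (subset_affineSpan ℝ A (intrinsicInterior_subset hp)) hzA⟩
  have hw₀ : w₀ ∈ interior B := (add_mem_intrinsicInterior_iff hzA).1 (by simpa [w₀] using hp)
  obtain ⟨f, hf⟩ := geometric_hahn_banach_open_point hB.interior isOpen_interior h0
  have hfB : ∀ v ∈ B, f v ≤ 0 := by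
    intro v hv
    have hv' : v ∈ closure (interior B) := by
      rw [hB.closure_interior_eq_closure_of_nonempty_interior ⟨w₀, hw₀⟩]
      exact subset_closure hv
    simpa using closure_lt_subset_le f.continuous continuous_const
      (closure_mono (fun v hv => by simpa using hf v hv) hv')
  obtain ⟨g, hg⟩ := LinearMap.exists_extend (f : W →ₗ[ℝ] ℝ)
  have hgf : ∀ v : W, g v = f v := fun v => LinearMap.congr_fun hg v
  refine ⟨g, fun y hy => ?_, p, intrinsicInterior_subset hp, ?_⟩
  · have := hfB ⟨y - z, AffineSubspace.vsub_mem_direction (subset_affineSpan ℝ A hy) hzA⟩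
      (by simpa [B] using hy)
    rw [← hgf] at this
    simpa [sub_nonpos] using this
  · have := hf w₀ hw₀
    rw [← hgf, ← hgf] at this
    simpa [w₀] using this

end Support

section RelintFaces

variable {n : ℕ} {A F F' : Set (Vec n)} {z : Vec n}

theorem mem_normalCone_of_mem_intrinsicInterior {c : Vec n} (hFA : F ⊆ A)
    (hz : z ∈ intrinsicInterior ℝ F) (hc : ∀ y ∈ A, dot c y ≤ dot c z) : c ∈ normalCone A F := by
  intro x hx
  refine ⟨hFA hx, fun y hy => (hc y hy).trans ?_⟩
  obtain ⟨ε, hε, hmem⟩ := exists_pos_add_smul_sub_mem_of_mem_intrinsicInterior hz hx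
  have := hc _ (hFA hmem)
  simp only [dot_eq_dotProduct, dotProduct_add, dotProduct_smul, dotProduct_sub,
    smul_eq_mul] at this ⊢
  nlinarith

theorem IsFace.subset_of_mem_intrinsicInterior (hF' : IsFace A F') (hFA : F ⊆ A)
    (hz : z ∈ intrinsicInterior ℝ F) (hz' : z ∈ F') : F ⊆ F' := by
  obtain ⟨c, rfl⟩ := hF'
  exact mem_normalCone_of_mem_intrinsicInterior hFA hz hz'.2

theorem IsFace.eq_of_mem_intrinsicInterior (hF : IsFace A F) (hF' : IsFace A F')
    (hz : z ∈ intrinsicInterior ℝ F) (hz' : z ∈ intrinsicInterior ℝ F') : F = F' :=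
  (hF'.subset_of_mem_intrinsicInterior hF.subset hz (intrinsicInterior_subset hz')).antisymm
    (hF.subset_of_mem_intrinsicInterior hF'.subset hz' (intrinsicInterior_subset hz))

theorem IsFace.eq_of_inter_eq {B G G' : Set (Vec n)} (hA : Convex ℝ A) (hB : Convex ℝ B)
    (hF : IsFace A F) (hG : IsFace B G) (hF' : IsFace A F') (hG' : IsFace B G')
    (h : (intrinsicInterior ℝ F ∩ intrinsicInterior ℝ G).Nonempty)
    (h' : (intrinsicInterior ℝ F' ∩ intrinsicInterior ℝ G').Nonempty) (hFG : F ∩ G = F' ∩ G') :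
    F = F' ∧ G = G' := by
  obtain ⟨z, hzF, hzG⟩ := h
  obtain ⟨z', hzF', hzG'⟩ := h'
  have hz' : z' ∈ F ∩ G := hFG ▸ ⟨intrinsicInterior_subset hzF', intrinsicInterior_subset hzG'⟩
  have hz : z ∈ F' ∩ G' := hFG ▸ ⟨intrinsicInterior_subset hzF, intrinsicInterior_subset hzG⟩
  refine ⟨hF.eq_of_mem_intrinsicInterior hF'
      (midpoint_mem_intrinsicInterior (hF.convex hA) hzF hz'.1) ?_,
    hG.eq_of_mem_intrinsicInterior hG'
      (midpoint_mem_intrinsicInterior (hG.convex hB) hzG hz'.2) ?_⟩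
  · rw [midpoint_comm]
    exact midpoint_mem_intrinsicInterior (hF'.convex hA) hzF' hz.1
  · rw [midpoint_comm]
    exact midpoint_mem_intrinsicInterior (hG'.convex hB) hzG' hz.2

end RelintFaces

section PolytopeFaces

variable {n : ℕ}

theorem exposedFace_convexHull (S : Set (Vec n)) (c : Vec n) :
    exposedFace (convexHull ℝ S) c = convexHull ℝ (exposedFace S c) := by
  refine Set.Subset.antisymm ?_ (convexHull_min ?_ (convex_exposedFace (convex_convexHull ℝ S) c))
  · rintro _ ⟨hx, hmax⟩
    obtain ⟨ι, _, w, p, hw, hw1, hp, rfl⟩ := mem_convexHull_iff_exists_fintype.1 hx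
    have hgap : ∀ i, 0 ≤ w i * (dot c (∑ j, w j • p j) - dot c (p i)) := fun i =>
      mul_nonneg (hw i) (sub_nonneg.2 (hmax _ (subset_convexHull ℝ S (hp i))))
    have hsum : ∑ i, w i * (dot c (∑ j, w j • p j) - dot c (p i)) = 0 := by
      simp only [mul_sub, Finset.sum_sub_distrib, ← Finset.sum_mul, hw1, one_mul]
      simp [dot_eq_dotProduct, dotProduct_sum, dotProduct_smul]
    have hface : ∀ i, w i ≠ 0 → p i ∈ exposedFace S c := by
      intro i hi
      have hi' := (mul_eq_zero.1 ((Finset.sum_eq_zero_iff_of_nonneg fun i _ => hgap i).1 hsum i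
        (Finset.mem_univ i))).resolve_left hi
      exact ⟨hp i, fun t ht => (hmax t (subset_convexHull ℝ S ht)).trans (sub_eq_zero.1 hi').le⟩
    rw [← Finset.sum_filter_of_ne (p := fun i => w i ≠ 0) fun i _ hi h => hi (by simp [h])]
    refine (convex_convexHull ℝ _).sum_mem (fun i _ => hw i) ?_
      fun i hi => subset_convexHull ℝ _ (hface i (Finset.mem_filter.1 hi).2)
    rw [Finset.sum_filter_ne_zero, hw1]
  · rintro s ⟨hs, hmax⟩
    exact ⟨subset_convexHull ℝ S hs, fun y hy => dot_le_of_mem_convexHull hmax hy⟩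

theorem exists_exposedFace_eq_exposedFace_exposedFace {S : Set (Vec n)} (hS : S.Finite)
    (c f : Vec n) : ∃ g, exposedFace S g = exposedFace (exposedFace S c) f := by
  set S₁ := exposedFace S c
  have hdot : ∀ (ε : ℝ) (x : Vec n), dot (c + ε • f) x = dot c x + ε * dot f x := by
    intro ε x
    simp [dot_eq_dotProduct, add_dotProduct, smul_dotProduct]
  have hlim : ∀ x : Vec n,
      Tendsto (fun ε : ℝ => dot c x + ε * dot f x) (𝓝[>] 0) (𝓝 (dot c x)) := by
    intro x
    have : Tendsto (fun ε : ℝ => dot c x + ε * dot f x) (𝓝 0) (𝓝 (dot c x + 0 * dot f x)) :=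
      tendsto_const_nhds.add (tendsto_id.mul_const _)
    simpa using this.mono_left nhdsWithin_le_nhds
  -- for small `ε > 0`, `c + ε • f` ranks `S \ S₁` below `S₁` and breaks ties in `S₁` by `f`
  have hsmall : ∀ᶠ ε in 𝓝[>] (0 : ℝ), ∀ p ∈ (S \ S₁) ×ˢ S₁,
      dot c p.1 + ε * dot f p.1 < dot c p.2 + ε * dot f p.2 := by
    refine ((hS.sdiff.prod (hS.subset exposedFace_subset)).eventually_all).2 fun p hp => ?_
    obtain ⟨⟨hp₁S, hp₁S₁⟩, hp₂⟩ := hp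
    have hlt : dot c p.1 < dot c p.2 := by
      by_contra! h
      exact hp₁S₁ ⟨hp₁S, fun y hy => (hp₂.2 y hy).trans h⟩
    exact (hlim p.1).eventually_lt (hlim p.2) hlt
  obtain ⟨ε, hε, hεpos⟩ := (hsmall.and self_mem_nhdsWithin).exists
  refine ⟨c + ε • f, Set.Subset.antisymm ?_ ?_⟩
  · rintro x ⟨hxS, hx⟩
    simp only [hdot] at hx
    have hxS₁ : x ∈ S₁ := by
      by_contra hxS₁
      obtain ⟨y, hyS, hy⟩ := Set.exists_max_image S (dot c) hS ⟨x, hxS⟩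
      linarith [hε (x, y) ⟨⟨hxS, hxS₁⟩, hyS, hy⟩, hx y hyS]
    refine ⟨hxS₁, fun y hy => ?_⟩
    have := hx y hy.1
    have := hy.2 x hxS₁.1
    have := hxS₁.2 y hy.1
    nlinarith
  · rintro x ⟨hxS₁, hx⟩
    refine ⟨hxS₁.1, fun y hyS => ?_⟩
    rw [hdot, hdot]
    by_cases hyS₁ : y ∈ S₁
    · have := hx y hyS₁
      have := hyS₁.2 x hxS₁.1
      have := hxS₁.2 y hyS
      nlinarith
    · exact (hε (y, x) ⟨⟨hyS, hyS₁⟩, hxS₁⟩).le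

namespace IsPolytope

variable {P F F' : Set (Vec n)} {z : Vec n}

theorem convex (hP : IsPolytope P) : Convex ℝ P := by
  obtain ⟨S, rfl⟩ := hP
  exact convex_convexHull ℝ _

theorem finite_setOf_isFace (hP : IsPolytope P) : {F | IsFace P F}.Finite := by
  obtain ⟨S, rfl⟩ := hP
  refine (S.finite_toSet.powerset.image (convexHull ℝ)).subset ?_
  rintro _ ⟨c, rfl⟩
  exact ⟨exposedFace S c, exposedFace_subset, (exposedFace_convexHull _ c).symm⟩

theorem isFace_trans (hP : IsPolytope P) (hF : IsFace P F) (hF' : IsFace F F') :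
    IsFace P F' := by
  obtain ⟨S, rfl⟩ := hP
  obtain ⟨c, rfl⟩ := isFace_iff.1 hF
  obtain ⟨f, rfl⟩ := isFace_iff.1 hF'
  obtain ⟨g, hg⟩ := exists_exposedFace_eq_exposedFace_exposedFace S.finite_toSet c f
  refine isFace_iff.2 ⟨g, ?_⟩
  rw [exposedFace_convexHull, exposedFace_convexHull, exposedFace_convexHull, hg]

theorem exists_isFace_mem_intrinsicInterior (hP : IsPolytope P) (hz : z ∈ P) :
    ∃ F, IsFace P F ∧ z ∈ intrinsicInterior ℝ F := by
  obtain ⟨F, hFmin⟩ := (hP.finite_setOf_isFace.subset fun F (hF : IsFace P F ∧ z ∈ F) => hF.1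
    ).exists_minimal ⟨P, isFace_self P, hz⟩
  obtain ⟨hF, hzF⟩ := hFmin.prop
  refine ⟨F, hF, ?_⟩
  by_contra hz'
  obtain ⟨f, hf, y, hyF, hy⟩ :=
    exists_linearMap_lt_of_notMem_intrinsicInterior (hF.convex hP.convex) hzF hz'
  obtain ⟨c, hc⟩ := exists_dot_eq f
  simp only [← hc] at hf hy
  have hsub : F ⊆ exposedFace F c :=
    hFmin.le_of_le ⟨hP.isFace_trans hF ⟨c, rfl⟩, hzF, hf⟩ exposedFace_subset
  exact (hy.trans_le ((hsub hyF).2 z hzF)).false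

end IsPolytope

end PolytopeFaces

section Farkas

namespace PointedCone

section Algebraic

variable {E : Type*} [AddCommGroup E] [Module ℝ E]

theorem mem_hull_finset_iff {s : Finset E} {x : E} :
    x ∈ hull ℝ (s : Set E) ↔ ∃ f : E → ℝ, (∀ y ∈ s, 0 ≤ f y) ∧ ∑ y ∈ s, f y • y = x := by
  classical
  rw [Submodule.mem_span_finset]
  constructor
  · rintro ⟨f, -, rfl⟩
    exact ⟨fun y => f y, fun y _ => (f y).2, rfl⟩
  · rintro ⟨f, hf, rfl⟩
    refine ⟨fun y => if h : y ∈ s then ⟨f y, hf y h⟩ else 0,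
      fun y hy => by_contra fun h => hy (dif_neg h),
      Finset.sum_congr rfl fun y hy => by simp [hy, ← Nonneg.coe_smul]⟩

theorem hull_finset_subset_iUnion_erase [DecidableEq E] {s : Finset E}
    (hs : ¬ LinearIndepOn ℝ id (s : Set E)) :
    (hull ℝ (s : Set E) : Set E) ⊆ ⋃ x ∈ s, (hull ℝ (s.erase x : Set E) : Set E) := by
  intro v hv
  obtain ⟨f, hf, rfl⟩ := mem_hull_finset_iff.1 hv
  obtain ⟨g, hg, i, his, hgi⟩ : ∃ g : E → ℝ, ∑ y ∈ s, g y • y = 0 ∧ ∃ i ∈ s, 0 < g i := by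
    obtain ⟨g, hg, i, his, hgi⟩ := not_linearIndepOn_finset_iff.1 hs
    rcases hgi.lt_or_gt with h | h
    · exact ⟨-g, by simpa [neg_smul, Finset.sum_neg_distrib] using hg, i, his, by simpa using h⟩
    · exact ⟨g, hg, i, his, h⟩
  obtain ⟨x, hxT, hx⟩ := (s.filter (0 < g ·)).exists_min_image (fun y => f y / g y)
    ⟨i, Finset.mem_filter.2 ⟨his, hgi⟩⟩
  obtain ⟨hxs, hgx⟩ := Finset.mem_filter.1 hxT
  set τ := f x / g x
  have hτ : 0 ≤ τ := div_nonneg (hf x hxs) hgx.le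
  refine Set.mem_biUnion hxs (mem_hull_finset_iff.2 ⟨fun y => f y - τ * g y, fun y hy => ?_, ?_⟩)
  · have hys := Finset.mem_of_mem_erase hy
    rcases lt_or_ge 0 (g y) with hgy | hgy
    · have := hx y (Finset.mem_filter.2 ⟨hys, hgy⟩)
      rw [le_div_iff₀ hgy] at this
      linarith
    · nlinarith [hf y hys]
  · rw [Finset.sum_erase s (by simp [τ, div_mul_cancel₀ _ hgx.ne'])]
    simp only [sub_smul, Finset.sum_sub_distrib, mul_smul, ← Finset.smul_sum, hg, smul_zero,
      sub_zero]

end Algebraic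

variable {E : Type*} [NormedAddCommGroup E] [NormedSpace ℝ E]

theorem isClosed_hull_of_linearIndepOn {s : Finset E} (hs : LinearIndepOn ℝ id (s : Set E)) :
    IsClosed (hull ℝ (s : Set E) : Set E) := by
  classical
  set L := Fintype.linearCombination ℝ fun y : (s : Set E) => (y : E)
  have hL : Topology.IsClosedEmbedding L := LinearMap.isClosedEmbedding_of_injective
    (LinearMap.ker_eq_bot.2 hs.fintypeLinearCombination_injective)
  have : (hull ℝ (s : Set E) : Set E) = L '' Set.univ.pi fun _ => Set.Ici 0 := by
    ext v
    rw [SetLike.mem_coe, mem_hull_finset_iff]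
    constructor
    · rintro ⟨f, hf, rfl⟩
      refine ⟨fun y => f y, fun y _ => hf y y.2, ?_⟩
      simp only [L, Fintype.linearCombination_apply]
      exact Finset.sum_coe_sort s (fun y => f y • y)
    · rintro ⟨l, hl, rfl⟩
      refine ⟨fun y => if h : y ∈ s then l ⟨y, h⟩ else 0,
        fun y hy => by simpa [hy] using hl ⟨y, hy⟩ trivial, ?_⟩
      simp only [L, Fintype.linearCombination_apply]
      rw [← Finset.sum_coe_sort s]
      exact Finset.sum_congr rfl fun y _ => by simp [y.2]
  rw [this]
  exact hL.isClosedMap _ (isClosed_set_pi fun _ _ => isClosed_Ici)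

theorem isClosed_hull_finset (s : Finset E) : IsClosed (hull ℝ (s : Set E) : Set E) := by
  classical
  induction s using Finset.strongInduction with
  | H s ih =>
    by_cases hs : LinearIndepOn ℝ id (s : Set E)
    · exact isClosed_hull_of_linearIndepOn hs
    · have : (hull ℝ (s : Set E) : Set E) = ⋃ x ∈ s, (hull ℝ (s.erase x : Set E) : Set E) :=
        (hull_finset_subset_iUnion_erase hs).antisymm
          (Set.iUnion₂_subset fun x _ => Submodule.span_mono (by simp))
      rw [this]
      exact isClosed_biUnion_finset fun x hx => ih _ (Finset.erase_ssubset hx)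

theorem exists_dual_nonneg_of_notMem_hull {ι : Type*} [Fintype ι] (a : ι → E) {x : E}
    (hx : x ∉ hull ℝ (Set.range a)) : ∃ f : StrongDual ℝ E, (∀ i, 0 ≤ f (a i)) ∧ f x < 0 := by
  classical
  have hclosed : IsClosed (hull ℝ (Set.range a) : Set E) := by
    simpa using isClosed_hull_finset (Finset.univ.image a)
  obtain ⟨f, hf, hfx⟩ := ProperCone.hyperplane_separation_point ⟨hull ℝ (Set.range a), hclosed⟩ hx
  exact ⟨f, fun i => hf _ (subset_hull ⟨i, rfl⟩), hfx⟩

end PointedCone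

variable {E : Type*} [NormedAddCommGroup E] [NormedSpace ℝ E]

theorem exists_dual_le_or_exists_nonneg_sum_smul_eq_zero {ι : Type*} [Fintype ι] (u : ι → E)
    (β : ι → ℝ) :
    (∃ f : StrongDual ℝ E, ∀ i, f (u i) ≤ β i) ∨
      ∃ l : ι → ℝ, (∀ i, 0 ≤ l i) ∧ ∑ i, l i • u i = 0 ∧ ∑ i, l i * β i < 0 := by
  by_cases h : ((0 : E), (-1 : ℝ)) ∈ PointedCone.hull ℝ (Set.range fun i => (u i, β i))
  · right
    obtain ⟨l, hl⟩ := (Submodule.mem_span_range_iff_exists_fun _).1 h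
    refine ⟨fun i => l i, fun i => (l i).2, ?_, ?_⟩
    · simpa [Prod.fst_sum, ← Nonneg.coe_smul] using congrArg Prod.fst hl
    · have := congrArg Prod.snd hl
      simp [Prod.snd_sum, ← Nonneg.coe_smul] at this
      linarith
  · left
    -- a functional separating `(0, -1)` from the cone, rescaled by `ρ = f (0, 1) > 0`
    obtain ⟨f, hf, hf0⟩ := PointedCone.exists_dual_nonneg_of_notMem_hull _ h
    set ρ := f (0, 1)
    have hρ : 0 < ρ := by
      have : f (0, -1) = -ρ := by rw [← map_neg]; simp
      linarith
    refine ⟨-ρ⁻¹ • f.comp (ContinuousLinearMap.inl ℝ E ℝ), fun i => ?_⟩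
    have hsplit : f (u i, β i) = f (u i, 0) + β i * ρ := by
      rw [← smul_eq_mul, ← map_smul, ← map_add]
      simp
    have hfi : ρ⁻¹ * f (u i, 0) = ρ⁻¹ * f (u i, β i) - β i := by
      rw [hsplit]
      field_simp
      ring
    simp only [smul_apply, ContinuousLinearMap.comp_apply,
      ContinuousLinearMap.inl_apply, smul_eq_mul, neg_mul, hfi]
    linarith [mul_nonneg (inv_nonneg.2 hρ.le) (hf i)]

end Farkas

section Decomposition

theorem Convex.add_smul_sum_sub_mem {E ι : Type*} [AddCommGroup E] [Module ℝ E] [Fintype ι]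
    {A : Set E} (hA : Convex ℝ A) {z : E} (hz : z ∈ A) {p : ι → E} (hp : ∀ i, p i ∈ A)
    {l : ι → ℝ} (hl : ∀ i, 0 ≤ l i) {ε : ℝ} (hε : 0 ≤ ε) (hεl : ε * ∑ i, l i ≤ 1) :
    z + ε • ∑ i, l i • (p i - z) ∈ A := by
  have := hA.sum_mem (t := Finset.univ) (z := fun o : Option ι => o.elim z p)
    (w := fun o => o.elim (1 - ε * ∑ i, l i) fun i => ε * l i)
    (by rintro (_ | i) - <;> simp [hεl, mul_nonneg hε (hl _)])
    (by simp [Fintype.sum_option, ← Finset.mul_sum])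
    (by rintro (_ | i) - <;> simp [hz, hp])
  convert this using 1
  simp only [Fintype.sum_option, Option.elim, smul_sub, Finset.smul_sum, Finset.sum_sub_distrib,
    sub_smul, mul_smul, Finset.sum_smul]
  module

theorem Convex.exists_pos_add_smul_mem_inter {E ι κ : Type*} [AddCommGroup E] [Module ℝ E]
    [Fintype ι] [Fintype κ] {A B : Set E} (hA : Convex ℝ A) (hB : Convex ℝ B) {z : E}
    (hz : z ∈ A ∩ B) {p : ι → E} (hp : ∀ i, p i ∈ A) {q : κ → E} (hq : ∀ j, q j ∈ B)
    {l : ι → ℝ} {m : κ → ℝ} (hl : ∀ i, 0 ≤ l i) (hm : ∀ j, 0 ≤ m j)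
    (hlm : ∑ i, l i • (p i - z) = ∑ j, m j • (q j - z)) :
    ∃ ε : ℝ, 0 < ε ∧ z + ε • ∑ i, l i • (p i - z) ∈ A ∩ B := by
  have hL : 0 ≤ ∑ i, l i := Finset.sum_nonneg fun i _ => hl i
  have hM : 0 ≤ ∑ j, m j := Finset.sum_nonneg fun j _ => hm j
  refine ⟨(∑ i, l i + ∑ j, m j + 1)⁻¹, by positivity,
    hA.add_smul_sum_sub_mem hz.1 hp hl (by positivity) ?_, ?_⟩
  · rw [inv_mul_le_iff₀ (by positivity)]
    linarith
  · rw [hlm]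
    refine hB.add_smul_sum_sub_mem hz.2 hq hm (by positivity) ?_
    rw [inv_mul_le_iff₀ (by positivity)]
    linarith

variable {n : ℕ} {P Q : Set (Vec n)} {c z : Vec n}

theorem IsPolytope.exists_split_of_forall_dot_le_inter (hP : IsPolytope P) (hQ : IsPolytope Q)
    (hz : z ∈ P ∩ Q) (hc : ∀ y ∈ P ∩ Q, dot c y ≤ dot c z) :
    ∃ a, (∀ y ∈ P, dot a y ≤ dot a z) ∧ ∀ y ∈ Q, dot (c - a) y ≤ dot (c - a) z := by
  obtain ⟨S, rfl⟩ := hP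
  obtain ⟨T, rfl⟩ := hQ
  -- the wanted `a` solves `a (s - z) ≤ 0` for `s ∈ S` and `a (z - t) ≤ c (z - t)` for `t ∈ T`;
  -- a certificate of infeasibility yields a direction `w` into both polytopes with `c w > 0`
  rcases exists_dual_le_or_exists_nonneg_sum_smul_eq_zero
      (Sum.elim (fun s : S => (s : Vec n) - z) fun t : T => z - t)
      (Sum.elim 0 fun t : T => dot c (z - t)) with ⟨f, hf⟩ | ⟨l, hl, hsum, hneg⟩
  · obtain ⟨a, ha⟩ := exists_dot_eq (f : Vec n →ₗ[ℝ] ℝ)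
    simp only [ContinuousLinearMap.coe_coe] at ha
    refine ⟨a, fun y hy => dot_le_of_mem_convexHull (fun s hs => ?_) hy,
      fun y hy => dot_le_of_mem_convexHull (fun t ht => ?_) hy⟩
    · have := hf (.inl ⟨s, hs⟩)
      simp only [Sum.elim_inl, Pi.zero_apply, map_sub] at this
      simp only [ha]
      linarith
    · have := hf (.inr ⟨t, ht⟩)
      simp only [Sum.elim_inr, map_sub, dot_eq_dotProduct, dotProduct_sub] at this
      simp only [dot_eq_dotProduct, sub_dotProduct] at ha ⊢
      linarith [ha t, ha z]
  · rw [Fintype.sum_sum_type] at hsum hneg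
    simp only [Sum.elim_inl, Sum.elim_inr, Pi.zero_apply, mul_zero, Finset.sum_const_zero,
      zero_add] at hsum hneg
    set w := ∑ s : S, l (.inl s) • ((s : Vec n) - z)
    have hw : w = ∑ t : T, l (.inr t) • ((t : Vec n) - z) := by
      rw [eq_neg_of_add_eq_zero_left hsum, ← Finset.sum_neg_distrib]
      simp only [← smul_neg, neg_sub]
    have hcw : 0 < dot c w := by
      rw [hw]
      simp only [dot_eq_dotProduct, dotProduct_sum, dotProduct_smul, smul_eq_mul,
        dotProduct_sub] at hneg ⊢
      have : ∑ t : T, l (.inr t) * (c ⬝ᵥ t - c ⬝ᵥ z) =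
          -∑ t : T, l (.inr t) * (c ⬝ᵥ z - c ⬝ᵥ t) := by
        rw [← Finset.sum_neg_distrib]
        exact Finset.sum_congr rfl fun t _ => by ring
      linarith
    obtain ⟨ε, hε, hmem⟩ := (convex_convexHull ℝ _).exists_pos_add_smul_mem_inter
      (convex_convexHull ℝ _) hz (fun s : S => subset_convexHull ℝ _ s.2)
      (fun t : T => subset_convexHull ℝ _ t.2) (fun s => hl (.inl s)) (fun t => hl (.inr t)) hw
    have := hc _ hmem
    simp only [dot_eq_dotProduct, dotProduct_add, dotProduct_smul, smul_eq_mul] at this hcw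
    nlinarith

end Decomposition

section Intersection

variable {n : ℕ} {P Q F G E : Set (Vec n)} {z : Vec n}

theorem normalCone_inter_eq (hP : IsPolytope P) (hQ : IsPolytope Q) (hF : IsFace P F)
    (hG : IsFace Q G) (hzF : z ∈ intrinsicInterior ℝ F) (hzG : z ∈ intrinsicInterior ℝ G) :
    normalCone (P ∩ Q) (F ∩ G) = coneOf (normalCone P F ∪ normalCone Q G) := by
  have hFG : F ∩ G ⊆ P ∩ Q := Set.inter_subset_inter hF.subset hG.subset
  refine Set.Subset.antisymm (fun c hc => ?_) (coneOf_subset_normalCone (Set.union_subset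
    (normalCone_anti Set.inter_subset_left Set.inter_subset_left hFG)
    (normalCone_anti Set.inter_subset_right Set.inter_subset_right hFG)) hFG)
  have hz : z ∈ F ∩ G := ⟨intrinsicInterior_subset hzF, intrinsicInterior_subset hzG⟩
  obtain ⟨a, ha, hb⟩ := hP.exists_split_of_forall_dot_le_inter hQ (hFG hz) (hc hz).2
  simpa using add_mem_coneOf
    (Or.inl (mem_normalCone_of_mem_intrinsicInterior hF.subset hzF ha) : a ∈ _ ∪ _)
    (Or.inr (mem_normalCone_of_mem_intrinsicInterior hG.subset hzG hb) : c - a ∈ _ ∪ _)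

theorem IsPolytope.exists_isFace_inter_eq (hP : IsPolytope P) (hQ : IsPolytope Q)
    (hE : IsFace (P ∩ Q) E) (hEne : E.Nonempty) :
    ∃ F G, IsFace P F ∧ IsFace Q G ∧
      (intrinsicInterior ℝ F ∩ intrinsicInterior ℝ G).Nonempty ∧ E = F ∩ G := by
  obtain ⟨z, hz⟩ := hEne.intrinsicInterior (hE.convex (hP.convex.inter hQ.convex))
  obtain ⟨hzP, hzQ⟩ := hE.subset (intrinsicInterior_subset hz)
  obtain ⟨F, hF, hzF⟩ := hP.exists_isFace_mem_intrinsicInterior hzP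
  obtain ⟨G, hG, hzG⟩ := hQ.exists_isFace_mem_intrinsicInterior hzQ
  have hzFG := intrinsicInterior_inter_subset ⟨hzF, hzG⟩
  exact ⟨F, G, hF, hG, ⟨z, hzF, hzG⟩, hE.eq_of_mem_intrinsicInterior
    (hF.inter hG ⟨z, intrinsicInterior_subset hzFG⟩) hz hzFG⟩

end Intersection

theorem stmt3_general {n : ℕ} (P Q : Set (Vec n))
    (hP : IsPolytope P) (hQ : IsPolytope Q) :
    (∀ F G : Set (Vec n), IsFace P F → IsFace Q G →
      (intrinsicInterior ℝ F ∩ intrinsicInterior ℝ G).Nonempty →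
      (F ∩ G).Nonempty ∧ IsFace (P ∩ Q) (F ∩ G) ∧
        normalCone (P ∩ Q) (F ∩ G) = coneOf (normalCone P F ∪ normalCone Q G)) ∧
    (∀ F G F' G' : Set (Vec n), IsFace P F → IsFace Q G → IsFace P F' → IsFace Q G' →
      (intrinsicInterior ℝ F ∩ intrinsicInterior ℝ G).Nonempty →
      (intrinsicInterior ℝ F' ∩ intrinsicInterior ℝ G').Nonempty →
      F ∩ G = F' ∩ G' → F = F' ∧ G = G') ∧
    (∀ E : Set (Vec n), IsFace (P ∩ Q) E → E.Nonempty →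
      ∃ F G : Set (Vec n), IsFace P F ∧ IsFace Q G ∧
        (intrinsicInterior ℝ F ∩ intrinsicInterior ℝ G).Nonempty ∧ E = F ∩ G) := by
  refine ⟨fun F G hF hG hFG => ?_,
    fun F G F' G' hF hG hF' hG' => IsFace.eq_of_inter_eq hP.convex hQ.convex hF hG hF' hG',
    fun E hE hEne => hP.exists_isFace_inter_eq hQ hE hEne⟩
  obtain ⟨z, hzF, hzG⟩ := hFG
  have hz : z ∈ F ∩ G := ⟨intrinsicInterior_subset hzF, intrinsicInterior_subset hzG⟩
  exact ⟨⟨z, hz⟩, hF.inter hG ⟨z, hz⟩, normalCone_inter_eq hP hQ hF hG hzF hzG⟩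

/-- For polytopes `P, Q ⊆ ℝⁿ` with `P ∩ Q` nonempty, the map
`(F, G) ↦ F ∩ G` is a bijection from the pairs of nonempty faces with intersecting relative
interiors onto the nonempty faces of the polytope `P ∩ Q`, and
`N_{P∩Q}(F ∩ G) = cone(N_P(F) ∪ N_Q(G))`. -/
theorem stmt3 {n : ℕ} (P Q : Set (Vec n))
    (hP : IsPolytope P) (hQ : IsPolytope Q) (hne : (P ∩ Q).Nonempty) :
    (∀ F G : Set (Vec n), IsFace P F → IsFace Q G →
      (intrinsicInterior ℝ F ∩ intrinsicInterior ℝ G).Nonempty →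
      (F ∩ G).Nonempty ∧ IsFace (P ∩ Q) (F ∩ G) ∧
        normalCone (P ∩ Q) (F ∩ G) = coneOf (normalCone P F ∪ normalCone Q G)) ∧
    (∀ F G F' G' : Set (Vec n), IsFace P F → IsFace Q G → IsFace P F' → IsFace Q G' →
      (intrinsicInterior ℝ F ∩ intrinsicInterior ℝ G).Nonempty →
      (intrinsicInterior ℝ F' ∩ intrinsicInterior ℝ G').Nonempty →
      F ∩ G = F' ∩ G' → F = F' ∧ G = G') ∧
    (∀ E : Set (Vec n), IsFace (P ∩ Q) E → E.Nonempty →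
      ∃ F G : Set (Vec n), IsFace P F ∧ IsFace Q G ∧
        (intrinsicInterior ℝ F ∩ intrinsicInterior ℝ G).Nonempty ∧ E = F ∩ G) :=
  stmt3_general P Q hP hQ
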